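/- arXiv:2112.01358 — 6 statements merged into one kernel-verified Lean document; each statement's English description precedes it below -/
import Mathlib

section
/- Let Ω ⊆ ℝ^n be a nonempty convex set and J : Ω → ℝ^p with each component J_i : Ω → ℝ convex. If x* ∈ Ω is weakly Pareto efficient for J on Ω, then there exists β ∈ ℝ^p with β_i ≥ 0 for all i and β ≠ 0 such that x* minimizes λ ↦ ∑_{i=1}^p β_i J_i(λ) over Ω. -/
lemma aux_nonneg_of_forall_pos (a b : ℝ) (h : ∀ ε : ℝ, 0 < ε → 0 < a + ε * b) :
    0 ≤ a := by
  by_contra hlt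
  push_neg at hlt
  rcases le_or_gt b 0 with hb | hb
  · have := h 1 one_pos; nlinarith
  · have := h (-a / (2 * b)) (div_pos (by linarith) (by linarith))
    have hb' : (-a / (2 * b)) * b = -a / 2 := by field_simp
    nlinarith

/-- If `Ω ⊆ ℝ^n` is nonempty and convex and each component `J i` is
convex on `Ω`, then every weakly Pareto efficient point `x ∈ Ω` for `J` minimizes
some nontrivial nonnegative scalarization `λ ↦ ∑ i, β i * J i λ` over `Ω`. -/
theorem weakly_pareto_exists_scalarization
    {n p : ℕ} (Ω : Set (Fin n → ℝ)) (hΩ : Ω.Nonempty) (hconv : Convex ℝ Ω)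
    (J : (Fin n → ℝ) → Fin p → ℝ)
    (hJconv : ∀ i, ConvexOn ℝ Ω (fun x => J x i))
    (x : Fin n → ℝ) (hx : x ∈ Ω)
    (hweff : ¬ ∃ x' ∈ Ω, ∀ i, J x' i < J x i) :
    ∃ β : Fin p → ℝ, (∀ i, 0 ≤ β i) ∧ β ≠ 0 ∧
      ∀ x' ∈ Ω, ∑ i, β i * J x i ≤ ∑ i, β i * J x' i := by
  classical
  set C : Set (Fin p → ℝ) := {y | ∃ x' ∈ Ω, ∀ i, J x' i - J x i < y i} with hCdef
  have hCconv : Convex ℝ C := by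
    rintro y1 ⟨a, ha, h1⟩ y2 ⟨b, hb, h2⟩ s t hs ht hst
    refine ⟨s • a + t • b, hconv ha hb hs ht hst, fun i => ?_⟩
    have hc := (hJconv i).2 ha hb hs ht hst
    simp only [smul_eq_mul, Pi.add_apply, Pi.smul_apply] at *
    rcases hs.lt_or_eq with hs' | hs'
    · have e1 : s * (J a i - J x i) < s * y1 i := mul_lt_mul_of_pos_left (h1 i) hs'
      have e2 : t * (J b i - J x i) ≤ t * y2 i := mul_le_mul_of_nonneg_left (h2 i).le ht
      have e3 : (s + t) * J x i = J x i := by rw [hst, one_mul]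
      nlinarith [e1, e2, e3, hc]
    · have hs0 : s = 0 := hs'.symm
      have ht1 : t = 1 := by linarith
      subst hs0; subst ht1
      simp only [zero_smul, one_smul, zero_add, zero_mul, one_mul] at hc ⊢
      linarith [h2 i]
  have hCopen : IsOpen C := by
    have hEq : C = ⋃ x' ∈ Ω, ⋂ i, {y : Fin p → ℝ | J x' i - J x i < y i} := by
      ext y; simp [hCdef, Set.mem_iUnion, Set.mem_iInter]
    rw [hEq]
    exact isOpen_biUnion fun x' _ => isOpen_iInter_of_finite fun i =>
      isOpen_lt continuous_const (continuous_apply i)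
  have h0 : (0 : Fin p → ℝ) ∉ C := by
    rintro ⟨x', hx', h⟩
    exact hweff ⟨x', hx', fun i => by have := h i; simpa using this⟩
  obtain ⟨f, hf⟩ := geometric_hahn_banach_open_point hCconv hCopen h0
  have hf0 : ∀ y ∈ C, f y < 0 := by
    intro y hy; have := hf y hy; simpa using this
  set β : Fin p → ℝ := fun i => -f (Pi.single i 1) with hβdef
  have key : ∀ y : Fin p → ℝ, f y = ∑ i, y i * f (Pi.single i 1) := by
    intro y
    have hy : y = ∑ i, y i • (Pi.single i 1 : Fin p → ℝ) := by
      ext j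
      simp [Finset.sum_apply, Pi.single_apply]
    calc f y = f (∑ i, y i • (Pi.single i 1 : Fin p → ℝ)) := by rw [← hy]
      _ = ∑ i, y i * f (Pi.single i 1) := by
          rw [map_sum]; simp [smul_eq_mul]
  have hpos : ∀ y ∈ C, 0 < ∑ i, β i * y i := by
    intro y hy
    have := hf0 y hy
    rw [key y] at this
    have : 0 < -∑ i, y i * f (Pi.single i 1) := by linarith
    calc (0:ℝ) < -∑ i, y i * f (Pi.single i 1) := this
      _ = ∑ i, β i * y i := by
          rw [← Finset.sum_neg_distrib]
          exact Finset.sum_congr rfl fun i _ => by simp [hβdef]; ring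
  have hmem : ∀ x' ∈ Ω, ∀ ε : ℝ, 0 < ε →
      (fun i => J x' i - J x i + ε) ∈ C := by
    intro x' hx' ε hε
    exact ⟨x', hx', fun i => by dsimp only; linarith⟩
  refine ⟨β, ?_, ?_, ?_⟩
  · intro i
    have h' : ∀ ε : ℝ, 0 < ε → 0 < β i + ε * ∑ j, β j := by
      intro ε hε
      have hy : (fun j => (Pi.single i 1 : Fin p → ℝ) j + ε) ∈ C := by
        refine ⟨x, hx, fun j => ?_⟩
        have : (0:ℝ) ≤ (Pi.single i 1 : Fin p → ℝ) j := by
          rcases eq_or_ne j i with rfl | h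
          · simp
          · simp [Pi.single_apply, h]
        simpa using by linarith
      have := hpos _ hy
      have hsum : ∑ j, β j * ((Pi.single i 1 : Fin p → ℝ) j + ε)
          = β i + ε * ∑ j, β j := by
        simp only [mul_add, Finset.sum_add_distrib]
        rw [Finset.mul_sum]
        congr 1
        · simp [Pi.single_apply, Finset.sum_ite_eq', mul_comm]
        · exact Finset.sum_congr rfl fun j _ => by ring
      rw [hsum] at this
      exact this
    exact aux_nonneg_of_forall_pos _ _ h'
  · intro hβ0
    have h1 : (fun _ : Fin p => (1:ℝ)) ∈ C := ⟨x, hx, fun i => by simp⟩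
    have := hpos _ h1
    rw [hβ0] at this
    simp at this
  · intro x' hx'
    have h' : ∀ ε : ℝ, 0 < ε →
        0 < (∑ i, β i * (J x' i - J x i)) + ε * ∑ i, β i := by
      intro ε hε
      have := hpos _ (hmem x' hx' ε hε)
      calc (0:ℝ) < ∑ i, β i * (J x' i - J x i + ε) := this
        _ = (∑ i, β i * (J x' i - J x i)) + ε * ∑ i, β i := by
            rw [Finset.mul_sum, ← Finset.sum_add_distrib]
            exact Finset.sum_congr rfl fun i _ => by ring
    have := aux_nonneg_of_forall_pos _ _ h'
    have hsplit : ∑ i, β i * (J x' i - J x i)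
        = (∑ i, β i * J x' i) - ∑ i, β i * J x i := by
      rw [← Finset.sum_sub_distrib]
      exact Finset.sum_congr rfl fun i _ => by ring
    linarith [hsplit ▸ this]
end

section
/- Let Λ ⊆ ℝ^n be nonempty and compact, and suppose for each i = 1,…,N that (x_i^n, y_i^n) → (x_i, y_i) in X × Y and that f(x_i^n, λ) → f(x_i, λ) as n → ∞ uniformly with respect to λ ∈ Λ, with λ ↦ f(x, λ) continuous for each x. Define DFE_n(λ)_i = d^Y(f(x_i^n, λ), y_i^n) and DFE(λ)_i = d^Y(f(x_i, λ), y_i). If λ_n ∈ Λ is weakly Pareto efficient for DFE_n for every n, then there exists a subsequence λ_{n_k} converging to some λ̄ ∈ Λ which is weakly Pareto efficient for DFE. -/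
/-- With `Λ ⊆ ℝ^n` nonempty compact, data `(x_i^k, y_i^k) → (x_i, y_i)`,
`f(x_i^k, ·) → f(x_i, ·)` uniformly on `Λ`, and `f(x, ·)` continuous for each `x`,
if each `λ_k ∈ Λ` is weakly Pareto efficient for `DFE_k`, then some subsequence of
`λ_k` converges to a point `λ̄ ∈ Λ` which is weakly Pareto efficient for `DFE`. -/
theorem weakly_pareto_limit
    {n N : ℕ} {X Y : Type*} [MetricSpace X] [MetricSpace Y]
    (Λ : Set (Fin n → ℝ)) (hne : Λ.Nonempty) (hcomp : IsCompact Λ)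
    (f : X → (Fin n → ℝ) → Y)
    (hfc : ∀ x : X, ContinuousOn (fun lam => f x lam) Λ)
    (xs : ℕ → Fin N → X) (ys : ℕ → Fin N → Y)
    (x : Fin N → X) (y : Fin N → Y)
    (hx : ∀ i, Filter.Tendsto (fun k => xs k i) Filter.atTop (nhds (x i)))
    (hy : ∀ i, Filter.Tendsto (fun k => ys k i) Filter.atTop (nhds (y i)))
    (hunif : ∀ i, TendstoUniformlyOn (fun k lam => f (xs k i) lam)
      (fun lam => f (x i) lam) Filter.atTop Λ)
    (DFEn : ℕ → (Fin n → ℝ) → Fin N → ℝ)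
    (DFE : (Fin n → ℝ) → Fin N → ℝ)
    (hDFEn : ∀ k lam i, DFEn k lam i = dist (f (xs k i) lam) (ys k i))
    (hDFE : ∀ lam i, DFE lam i = dist (f (x i) lam) (y i))
    (lamseq : ℕ → Fin n → ℝ) (hmem : ∀ k, lamseq k ∈ Λ)
    (hweff : ∀ k, ¬ ∃ lam' ∈ Λ, ∀ i, DFEn k lam' i < DFEn k (lamseq k) i) :
    ∃ φ : ℕ → ℕ, StrictMono φ ∧ ∃ lambar ∈ Λ,
      Filter.Tendsto (lamseq ∘ φ) Filter.atTop (nhds lambar) ∧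
      ¬ ∃ lam' ∈ Λ, ∀ i, DFE lam' i < DFE lambar i := by
  obtain ⟨lambar, hbar, φ, hφ, hconv⟩ := hcomp.tendsto_subseq hmem
  refine ⟨φ, hφ, lambar, hbar, hconv, ?_⟩
  rintro ⟨lam', hlam', hlt⟩
  have hφtop : Filter.Tendsto φ Filter.atTop Filter.atTop := hφ.tendsto_atTop
  -- reindexed uniform convergence
  have hunif' : ∀ i, TendstoUniformlyOn (fun k lam => f (xs (φ k) i) lam)
      (fun lam => f (x i) lam) Filter.atTop Λ :=
    fun i u hu => hφtop.eventually (hunif i u hu)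
  -- convergence within Λ
  have hconvW : Filter.Tendsto (lamseq ∘ φ) Filter.atTop (nhdsWithin lambar Λ) :=
    tendsto_nhdsWithin_of_tendsto_nhds_of_eventually_within _ hconv
      (Filter.Eventually.of_forall fun k => hmem (φ k))
  -- for each i: DFEn (φ k) lam' i → DFE lam' i
  have hA : ∀ i, Filter.Tendsto (fun k => DFEn (φ k) lam' i) Filter.atTop
      (nhds (DFE lam' i)) := by
    intro i
    have h1 : Filter.Tendsto (fun k => f (xs (φ k) i) lam') Filter.atTop
        (nhds (f (x i) lam')) := (hunif' i).tendsto_at hlam'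
    have h2 : Filter.Tendsto (fun k => ys (φ k) i) Filter.atTop (nhds (y i)) :=
      (hy i).comp hφtop
    have := h1.dist h2
    simpa only [hDFEn, hDFE] using this
  -- DFEn (φ k) (lamseq (φ k)) i → DFE lambar i
  have hB : ∀ i, Filter.Tendsto (fun k => DFEn (φ k) (lamseq (φ k)) i) Filter.atTop
      (nhds (DFE lambar i)) := by
    intro i
    have h1 : Filter.Tendsto (fun k => f (xs (φ k) i) (lamseq (φ k))) Filter.atTop
        (nhds (f (x i) lambar)) :=
      (hunif' i).tendsto_comp ((hfc (x i)) lambar hbar) hconvW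
    have h2 : Filter.Tendsto (fun k => ys (φ k) i) Filter.atTop (nhds (y i)) :=
      (hy i).comp hφtop
    have := h1.dist h2
    simpa only [hDFEn, hDFE] using this
  have hev : ∀ᶠ k in Filter.atTop, ∀ i,
      DFEn (φ k) lam' i < DFEn (φ k) (lamseq (φ k)) i :=
    Filter.eventually_all.2 fun i => (hA i).eventually_lt (hB i) (hlt i)
  obtain ⟨k, hk⟩ := hev.exists
  exact hweff (φ k) ⟨lam', hlam', hk⟩
end

section
/- Let Λ ⊆ ℝ^n be nonempty and compact, and suppose for each i = 1,…,N that (x_i^n, y_i^n) → (x_i, y_i) in X × Y and that f(x_i^n, λ) → f(x_i, λ) as n → ∞ uniformly with respect to λ ∈ Λ, with λ ↦ f(x, λ) continuous for each x. Define DFE_n(λ)_i = d^Y(f(x_i^n, λ), y_i^n) and DFE(λ)_i = d^Y(f(x_i, λ), y_i). Let C ⊆ ℝ^N be a cone with the nonnegative orthant ℝ^N_+ contained in int C ∪ {0}. If λ_n ∈ Λ is properly Pareto efficient with respect to C for DFE_n for every n, then there exists a subsequence λ_{n_k} converging to some λ̄ ∈ Λ which is Pareto efficient for DFE. -/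
/-- With `Λ ⊆ ℝ^n` nonempty compact, data `(x_i^k, y_i^k) → (x_i, y_i)`,
`f(x_i^k, ·) → f(x_i, ·)` uniformly on `Λ`, `f(x, ·)` continuous for each `x`, and a
cone `C ⊆ ℝ^N` with the nonnegative orthant contained in `interior C ∪ {0}`, if each
`λ_k ∈ Λ` is properly Pareto efficient with respect to `C` for `DFE_k`, then some
subsequence of `λ_k` converges to a point `λ̄ ∈ Λ` which is Pareto efficient for `DFE`. -/
theorem properly_pareto_limit
    {n N : ℕ} {X Y : Type*} [MetricSpace X] [MetricSpace Y]
    (Λ : Set (Fin n → ℝ)) (hne : Λ.Nonempty) (hcomp : IsCompact Λ)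
    (f : X → (Fin n → ℝ) → Y)
    (hfc : ∀ x : X, ContinuousOn (fun lam => f x lam) Λ)
    (xs : ℕ → Fin N → X) (ys : ℕ → Fin N → Y)
    (x : Fin N → X) (y : Fin N → Y)
    (hx : ∀ i, Filter.Tendsto (fun k => xs k i) Filter.atTop (nhds (x i)))
    (hy : ∀ i, Filter.Tendsto (fun k => ys k i) Filter.atTop (nhds (y i)))
    (hunif : ∀ i, TendstoUniformlyOn (fun k lam => f (xs k i) lam)
      (fun lam => f (x i) lam) Filter.atTop Λ)
    (DFEn : ℕ → (Fin n → ℝ) → Fin N → ℝ)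
    (DFE : (Fin n → ℝ) → Fin N → ℝ)
    (hDFEn : ∀ k lam i, DFEn k lam i = dist (f (xs k i) lam) (ys k i))
    (hDFE : ∀ lam i, DFE lam i = dist (f (x i) lam) (y i))
    (C : Set (Fin N → ℝ))
    (hcone : ∀ c ∈ C, ∀ t : ℝ, 0 < t → t • c ∈ C)
    (horth : {v : Fin N → ℝ | ∀ i, 0 ≤ v i} ⊆ interior C ∪ {0})
    (lamseq : ℕ → Fin n → ℝ) (hmem : ∀ k, lamseq k ∈ Λ)
    (hpeff : ∀ k, ∀ lam' ∈ Λ,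
      DFEn k (lamseq k) - DFEn k lam' ∈ C → DFEn k lam' = DFEn k (lamseq k)) :
    ∃ φ : ℕ → ℕ, StrictMono φ ∧ ∃ lambar ∈ Λ,
      Filter.Tendsto (lamseq ∘ φ) Filter.atTop (nhds lambar) ∧
      ∀ lam' ∈ Λ, (∀ i, DFE lam' i ≤ DFE lambar i) → DFE lam' = DFE lambar := by

  obtain ⟨lambar, hlambar, φ, hφ, hconv⟩ := hcomp.tendsto_subseq hmem
  refine ⟨φ, hφ, lambar, hlambar, hconv, ?_⟩
  intro lam' hlam' hle
  by_contra hne'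
  set v : Fin N → ℝ := DFE lambar - DFE lam' with hv
  have hv0 : v ≠ 0 := by
    intro h
    apply hne'
    funext i
    have := congrFun h i
    have h0 : DFE lambar i - DFE lam' i = 0 := by simpa [hv] using this
    linarith [sub_eq_zero.mp h0]
  have hvpos : ∀ i, 0 ≤ v i := fun i => sub_nonneg.2 (hle i)
  have hvint : v ∈ interior C := by
    rcases horth hvpos with h | h
    · exact h
    · exact absurd h hv0
  -- subsequence uniform convergence
  have hunif' : ∀ i, TendstoUniformlyOn (fun k lam => f (xs (φ k) i) lam)
      (fun lam => f (x i) lam) Filter.atTop Λ :=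
    fun i u hu => hφ.tendsto_atTop.eventually ((hunif i) u hu)
  have hconvin : Filter.Tendsto (lamseq ∘ φ) Filter.atTop (nhdsWithin lambar Λ) :=
    tendsto_nhdsWithin_of_tendsto_nhds_of_eventually_within _ hconv
      (Filter.Eventually.of_forall fun k => hmem (φ k))
  have h1 : ∀ i, Filter.Tendsto (fun k => DFEn (φ k) (lamseq (φ k)) i)
      Filter.atTop (nhds (DFE lambar i)) := by
    intro i
    have hF : Filter.Tendsto (fun k => f (xs (φ k) i) (lamseq (φ k)))
        Filter.atTop (nhds (f (x i) lambar)) :=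
      (hunif' i).tendsto_comp ((hfc (x i)) lambar hlambar) hconvin
    have := hF.dist ((hy i).comp hφ.tendsto_atTop)
    simpa [hDFEn, hDFE] using this
  have h2 : ∀ i, Filter.Tendsto (fun k => DFEn (φ k) lam' i)
      Filter.atTop (nhds (DFE lam' i)) := by
    intro i
    have hF : Filter.Tendsto (fun k => f (xs (φ k) i) lam')
        Filter.atTop (nhds (f (x i) lam')) :=
      ((hunif i).tendsto_at hlam').comp hφ.tendsto_atTop
    have := hF.dist ((hy i).comp hφ.tendsto_atTop)
    simpa [hDFEn, hDFE] using this
  have hdiff : Filter.Tendsto (fun k => DFEn (φ k) (lamseq (φ k)) - DFEn (φ k) lam')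
      Filter.atTop (nhds v) := by
    rw [tendsto_pi_nhds]
    intro i
    have := (h1 i).sub (h2 i)
    simpa [hv] using this
  have hev : ∀ᶠ k in Filter.atTop,
      DFEn (φ k) (lamseq (φ k)) - DFEn (φ k) lam' ∈ interior C :=
    hdiff.eventually (isOpen_interior.eventually_mem hvint)
  have hzero : ∀ᶠ k in Filter.atTop,
      DFEn (φ k) (lamseq (φ k)) - DFEn (φ k) lam' = 0 := by
    filter_upwards [hev] with k hk
    have := hpeff (φ k) lam' hlam' (interior_subset hk)
    simp [this]
  have : v = 0 :=
    tendsto_nhds_unique hdiff (Filter.Tendsto.congr'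
      (by filter_upwards [hzero] with k hk; exact hk.symm) tendsto_const_nhds)
  exact hv0 this
end

section
/- Let Λ ⊆ ℝ^n, let Z be a metric space with distance d^Z, let g_1,…,g_N : Λ × Z → ℝ, and for weights β_1,…,β_N ∈ (0,1] with ∑ β_i = 1 define l(λ, z) = ∑_{i=1}^N β_i g_i(λ, z_i) for z = (z_1,…,z_N) ∈ Z^N. Fix z⁰ ∈ Z^N and suppose: (i) there exists λ(z⁰) ∈ Λ which is an isolated minimizer of order α > 0 with constant h > 0 for l(·, z⁰) on Λ; (ii) for every λ ∈ Λ and every i, g_i(λ, ·) is Hölder of order δ > 0 with constant m > 0 on Z, i.e. |g_i(λ, z¹) − g_i(λ, z²)| ≤ m d^Z(z¹, z²)^δ for all z¹, z² ∈ Z. Then for every z ∈ Z^N and every minimizer λ(z) of l(·, z) on Λ, ‖λ(z) − λ(z⁰)‖ ≤ (2m/h)^{1/α} ( ∑_{i=1}^N d^Z(z_i, z_i⁰)^δ )^{1/α}. -/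
/-- If `λ(z⁰)` is an isolated minimizer of order `α > 0` with constant
`h > 0` for the scalarized loss `l(·, z⁰)` on `Λ`, and each `g i (λ, ·)` is Hölder of
order `δ > 0` with constant `m > 0`, then every minimizer `λ(z)` of `l(·, z)` on `Λ`
satisfies `‖λ(z) − λ(z⁰)‖ ≤ (2m/h)^(1/α) (∑ i, d^Z(z_i, z_i⁰)^δ)^(1/α)`. -/
theorem isolated_minimizer_stability
    {n N : ℕ} {Z : Type*} [MetricSpace Z]
    (Λ : Set (EuclideanSpace ℝ (Fin n)))
    (g : Fin N → EuclideanSpace ℝ (Fin n) → Z → ℝ)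
    (β : Fin N → ℝ) (hβ : ∀ i, β i ∈ Set.Ioc (0 : ℝ) 1) (hβsum : ∑ i, β i = 1)
    (l : EuclideanSpace ℝ (Fin n) → (Fin N → Z) → ℝ)
    (hl : ∀ lam z, l lam z = ∑ i, β i * g i lam (z i))
    (z0 : Fin N → Z)
    (α h : ℝ) (hα : 0 < α) (hh : 0 < h)
    (lam0 : EuclideanSpace ℝ (Fin n)) (hlam0 : lam0 ∈ Λ)
    (hiso : ∀ lam ∈ Λ, h * ‖lam - lam0‖ ^ α ≤ l lam z0 - l lam0 z0)
    (δ m : ℝ) (hδ : 0 < δ) (hm : 0 < m)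
    (hHold : ∀ lam ∈ Λ, ∀ i, ∀ z1 z2 : Z,
      |g i lam z1 - g i lam z2| ≤ m * dist z1 z2 ^ δ)
    (z : Fin N → Z)
    (lamz : EuclideanSpace ℝ (Fin n)) (hlamz : lamz ∈ Λ)
    (hmin : ∀ lam ∈ Λ, l lamz z ≤ l lam z) :
    ‖lamz - lam0‖ ≤
      (2 * m / h) ^ (1 / α) * (∑ i, dist (z i) (z0 i) ^ δ) ^ (1 / α) := by
  set S := ∑ i, dist (z i) (z0 i) ^ δ with hS
  have hS0 : 0 ≤ S := Finset.sum_nonneg fun i _ =>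
    Real.rpow_nonneg dist_nonneg δ
  -- bound |l lam z - l lam z0| ≤ m * S for lam ∈ Λ
  have key : ∀ lam ∈ Λ, |l lam z - l lam z0| ≤ m * S := by
    intro lam hlam
    rw [hl, hl, ← Finset.sum_sub_distrib]
    calc |∑ i, (β i * g i lam (z i) - β i * g i lam (z0 i))|
        ≤ ∑ i, |β i * g i lam (z i) - β i * g i lam (z0 i)| :=
          Finset.abs_sum_le_sum_abs _ _
      _ ≤ ∑ i, m * dist (z i) (z0 i) ^ δ := by
          apply Finset.sum_le_sum
          intro i _
          rw [← mul_sub, abs_mul, abs_of_pos (hβ i).1]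
          calc β i * |g i lam (z i) - g i lam (z0 i)|
              ≤ 1 * (m * dist (z i) (z0 i) ^ δ) := by
                apply mul_le_mul (hβ i).2 (hHold lam hlam i _ _) (abs_nonneg _)
                  zero_le_one
            _ = m * dist (z i) (z0 i) ^ δ := one_mul _
      _ = m * S := by rw [hS, Finset.mul_sum]
  have h1 := key lamz hlamz
  have h2 := key lam0 hlam0
  have h3 := hmin lam0 hlam0
  have h4 := hiso lamz hlamz
  have main : h * ‖lamz - lam0‖ ^ α ≤ 2 * m * S := by
    have a1 : l lamz z0 - l lamz z ≤ m * S := by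
      have := neg_abs_le (l lamz z - l lamz z0); linarith [abs_le.mp h1]
    have a2 : l lam0 z - l lam0 z0 ≤ m * S := (abs_le.mp h2).2
    linarith
  have hnorm : ‖lamz - lam0‖ ^ α ≤ 2 * m / h * S := by
    rw [div_mul_eq_mul_div, le_div_iff₀ hh, mul_comm]
    exact main
  have hαne : α ≠ 0 := ne_of_gt hα
  calc ‖lamz - lam0‖ = (‖lamz - lam0‖ ^ α) ^ (1 / α) := by
        rw [← Real.rpow_mul (norm_nonneg _), mul_one_div, div_self hαne,
          Real.rpow_one]
    _ ≤ (2 * m / h * S) ^ (1 / α) := by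
        apply Real.rpow_le_rpow (Real.rpow_nonneg (norm_nonneg _) _) hnorm
        positivity
    _ = (2 * m / h) ^ (1 / α) * S ^ (1 / α) := by
        rw [Real.mul_rpow (by positivity) hS0]
end

section
/- Let Λ ⊆ ℝ^n, let Z be a metric space, let g_1,…,g_N : Λ × Z → ℝ, and for weights β_1,…,β_N ∈ (0,1] with ∑ β_i = 1 set l(λ, z) = ∑_{i=1}^N β_i g_i(λ, z_i) for z ∈ Z^N; let S_z denote the set of minimizers of l(·, z) over Λ. Fix z⁰ ∈ Z^N and assume: (i) some λ(z⁰) ∈ Λ is an isolated minimizer of order α > 0 with constant h > 0 for l(·, z⁰); (ii) for every λ ∈ Λ and every i, g_i(λ, ·) is Hölder of order δ > 0 with constant m > 0 on Z. Then for every z ∈ Z^N, the excess satisfies e(S_z, S_{z⁰}) ≤ (2m/h)^{1/α} ( ∑_{i=1}^N d^Z(z_i, z_i⁰)^δ )^{1/α}. -/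
/-- Under the hypotheses of Statement 11, for every `z ∈ Z^N` the
excess `e(S_z, S_{z⁰}) = sup_{a ∈ S_z} dist(a, S_{z⁰})` of the set `S_z` of
minimizers of `l(·, z)` over the set `S_{z⁰}` of minimizers of `l(·, z⁰)` satisfies
`e(S_z, S_{z⁰}) ≤ (2m/h)^(1/α) (∑ i, d^Z(z_i, z_i⁰)^δ)^(1/α)`. -/
theorem minimizer_set_excess_bound
    {n N : ℕ} {Z : Type*} [MetricSpace Z]
    (Λ : Set (EuclideanSpace ℝ (Fin n)))
    (g : Fin N → EuclideanSpace ℝ (Fin n) → Z → ℝ)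
    (β : Fin N → ℝ) (hβ : ∀ i, β i ∈ Set.Ioc (0 : ℝ) 1) (hβsum : ∑ i, β i = 1)
    (l : EuclideanSpace ℝ (Fin n) → (Fin N → Z) → ℝ)
    (hl : ∀ lam z, l lam z = ∑ i, β i * g i lam (z i))
    (S : (Fin N → Z) → Set (EuclideanSpace ℝ (Fin n)))
    (hS : ∀ z, S z = {lam ∈ Λ | ∀ lam' ∈ Λ, l lam z ≤ l lam' z})
    (z0 : Fin N → Z)
    (α h : ℝ) (hα : 0 < α) (hh : 0 < h)
    (lam0 : EuclideanSpace ℝ (Fin n)) (hlam0 : lam0 ∈ Λ)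
    (hiso : ∀ lam ∈ Λ, h * ‖lam - lam0‖ ^ α ≤ l lam z0 - l lam0 z0)
    (δ m : ℝ) (hδ : 0 < δ) (hm : 0 < m)
    (hHold : ∀ lam ∈ Λ, ∀ i, ∀ z1 z2 : Z,
      |g i lam z1 - g i lam z2| ≤ m * dist z1 z2 ^ δ)
    (z : Fin N → Z) :
    sSup ((fun a => Metric.infDist a (S z0)) '' S z) ≤
      (2 * m / h) ^ (1 / α) * (∑ i, dist (z i) (z0 i) ^ δ) ^ (1 / α) := by
  set D : ℝ := ∑ i, dist (z i) (z0 i) ^ δ with hDdef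
  have hD : 0 ≤ D := Finset.sum_nonneg fun i _ => Real.rpow_nonneg dist_nonneg _
  have hbound_nonneg : 0 ≤ (2 * m / h) ^ (1 / α) * D ^ (1 / α) :=
    mul_nonneg (Real.rpow_nonneg (by positivity) _) (Real.rpow_nonneg hD _)
  -- lam0 minimizes l · z0
  have hlam0S : lam0 ∈ S z0 := by
    rw [hS]
    refine ⟨hlam0, fun lam' hlam' => ?_⟩
    have h1 := hiso lam' hlam'
    have h2 : 0 ≤ h * ‖lam' - lam0‖ ^ α :=
      mul_nonneg hh.le (Real.rpow_nonneg (norm_nonneg _) _)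
    linarith
  -- key Hölder-type bound on l
  have key : ∀ lam ∈ Λ, |l lam z - l lam z0| ≤ m * D := by
    intro lam hlam
    have : l lam z - l lam z0 = ∑ i, β i * (g i lam (z i) - g i lam (z0 i)) := by
      rw [hl, hl, ← Finset.sum_sub_distrib]
      exact Finset.sum_congr rfl fun i _ => by ring
    rw [this]
    calc |∑ i, β i * (g i lam (z i) - g i lam (z0 i))|
        ≤ ∑ i, |β i * (g i lam (z i) - g i lam (z0 i))| := Finset.abs_sum_le_sum_abs _ _
      _ ≤ ∑ i, m * dist (z i) (z0 i) ^ δ := by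
          refine Finset.sum_le_sum fun i _ => ?_
          rw [abs_mul, abs_of_pos (hβ i).1]
          calc β i * |g i lam (z i) - g i lam (z0 i)|
              ≤ 1 * (m * dist (z i) (z0 i) ^ δ) := by
                apply mul_le_mul (hβ i).2 (hHold lam hlam i _ _) (abs_nonneg _) one_pos.le
            _ = m * dist (z i) (z0 i) ^ δ := one_mul _
      _ = m * D := by rw [hDdef, Finset.mul_sum]
  apply Real.sSup_le _ hbound_nonneg
  rintro x ⟨a, haS, rfl⟩
  have ha := haS
  rw [hS] at ha
  obtain ⟨haΛ, hamin⟩ := ha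
  -- chain of inequalities
  have h1 : h * ‖a - lam0‖ ^ α ≤ 2 * m * D := by
    have k1 := key a haΛ
    have k2 := key lam0 hlam0
    have k3 : l a z ≤ l lam0 z := hamin lam0 hlam0
    have k4 := hiso a haΛ
    have a1 : l a z0 ≤ l a z + m * D := by
      have := abs_le.1 k1; linarith [this.1, this.2]
    have a2 : l lam0 z ≤ l lam0 z0 + m * D := by
      have := abs_le.1 k2; linarith [this.1, this.2]
    linarith
  have hnorm : ‖a - lam0‖ ≤ (2 * m / h) ^ (1 / α) * D ^ (1 / α) := by
    have hx : (0:ℝ) ≤ ‖a - lam0‖ := norm_nonneg _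
    have h2 : ‖a - lam0‖ ^ α ≤ 2 * m * D / h := by
      rw [le_div_iff₀ hh]; linarith [h1]
    have h3 : (‖a - lam0‖ ^ α) ^ (1 / α) ≤ (2 * m * D / h) ^ (1 / α) :=
      Real.rpow_le_rpow (Real.rpow_nonneg hx _) h2 (by positivity)
    have h4 : (‖a - lam0‖ ^ α) ^ (1 / α) = ‖a - lam0‖ := by
      rw [← Real.rpow_mul hx, mul_one_div_cancel hα.ne', Real.rpow_one]
    rw [h4] at h3
    calc ‖a - lam0‖ ≤ (2 * m * D / h) ^ (1 / α) := h3
      _ = (2 * m / h) ^ (1 / α) * D ^ (1 / α) := by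
          rw [← Real.mul_rpow (by positivity) hD]
          ring_nf
  calc Metric.infDist a (S z0) ≤ dist a lam0 := Metric.infDist_le_dist_of_mem hlam0S
    _ = ‖a - lam0‖ := by rw [dist_eq_norm]
    _ ≤ _ := hnorm
end

section
/- Let Λ ⊆ ℝ^n be nonempty and compact, (X, d^X) and (Y, d^Y) metric spaces, f : X × Λ → Y with λ ↦ f(x, λ) continuous for each x, and let Z = X × Y with d^Z = d^X + d^Y. For z = (z_1,…,z_N) ∈ Z^N with z_i = (x_i, y_i), set g_i(λ, z_i) = d^Y(f(x_i, λ), y_i) and DFE_z(λ) = (g_1(λ, z_1),…,g_N(λ, z_N)); let Eff_z denote the set of Pareto efficient points of DFE_z on Λ. Fix z⁰ ∈ Z^N and suppose: (i) for some weights β_1,…,β_N ∈ (0,1] with ∑ β_i = 1 there is a point λ(z⁰) ∈ Λ that is an isolated minimizer of order α > 0 with constant h > 0 for l(λ, z⁰) = ∑ β_i g_i(λ, z_i⁰) on Λ; (ii) for every λ ∈ Λ and every i, g_i(λ, ·) is Hölder of order δ > 0 with constant m > 0 on Z. Then for every z ∈ Z^N there exists λ(z) ∈ Eff_z such that dist(λ(z),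 Eff_{z⁰}) ≤ (2m/h)^{1/α} ( ∑_{i=1}^N d^Z(z_i, z_i⁰)^δ )^{1/α}. -/
/-- With `Λ ⊆ ℝ^n` nonempty compact, `f(x, ·)` continuous on `Λ`,
`Z = X × Y` with `d^Z = d^X + d^Y`, `g i (λ, (x_i, y_i)) = d^Y(f(x_i, λ), y_i)`, and
`Eff_z` the Pareto efficient set of `DFE_z` on `Λ`: if some `λ(z⁰)` is an isolated
minimizer of order `α` with constant `h` for the scalarized loss `l(·, z⁰)`, and each
`g i (λ, ·)` is Hölder of order `δ` with constant `m`, then for every `z` there is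
`λ(z) ∈ Eff_z` with `dist(λ(z), Eff_{z⁰}) ≤ (2m/h)^(1/α) (∑ i, d^Z(z_i, z_i⁰)^δ)^(1/α)`. -/
theorem efficient_set_stability
    {n N : ℕ} {X Y : Type*} [MetricSpace X] [MetricSpace Y]
    (Λ : Set (EuclideanSpace ℝ (Fin n))) (hne : Λ.Nonempty) (hcomp : IsCompact Λ)
    (f : X → EuclideanSpace ℝ (Fin n) → Y)
    (hfc : ∀ x : X, ContinuousOn (fun lam => f x lam) Λ)
    (g : Fin N → EuclideanSpace ℝ (Fin n) → X × Y → ℝ)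
    (hg : ∀ i lam (zi : X × Y), g i lam zi = dist (f zi.1 lam) zi.2)
    (Eff : (Fin N → X × Y) → Set (EuclideanSpace ℝ (Fin n)))
    (hEff : ∀ z, Eff z = {lam ∈ Λ | ∀ lam' ∈ Λ,
      (∀ i, g i lam' (z i) ≤ g i lam (z i)) → (∀ i, g i lam' (z i) = g i lam (z i))})
    (β : Fin N → ℝ) (hβ : ∀ i, β i ∈ Set.Ioc (0 : ℝ) 1) (hβsum : ∑ i, β i = 1)
    (z0 : Fin N → X × Y)
    (α h : ℝ) (hα : 0 < α) (hh : 0 < h)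
    (lam0 : EuclideanSpace ℝ (Fin n)) (hlam0 : lam0 ∈ Λ)
    (hiso : ∀ lam ∈ Λ, h * ‖lam - lam0‖ ^ α ≤
      (∑ i, β i * g i lam (z0 i)) - ∑ i, β i * g i lam0 (z0 i))
    (δ m : ℝ) (hδ : 0 < δ) (hm : 0 < m)
    (hHold : ∀ lam ∈ Λ, ∀ i, ∀ z1 z2 : X × Y,
      |g i lam z1 - g i lam z2| ≤ m * (dist z1.1 z2.1 + dist z1.2 z2.2) ^ δ)
    (z : Fin N → X × Y) :
    ∃ lamz ∈ Eff z, Metric.infDist lamz (Eff z0) ≤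
      (2 * m / h) ^ (1 / α) *
        (∑ i, (dist (z i).1 (z0 i).1 + dist (z i).2 (z0 i).2) ^ δ) ^ (1 / α) := by
  classical
  set S : ℝ := ∑ i, (dist (z i).1 (z0 i).1 + dist (z i).2 (z0 i).2) ^ δ with hSdef
  have hS0 : 0 ≤ S :=
    Finset.sum_nonneg fun i _ => Real.rpow_nonneg (by positivity) _
  -- Pareto efficiency from scalarized minimality
  have pareto : ∀ (w : Fin N → X × Y) (lam : EuclideanSpace ℝ (Fin n)), lam ∈ Λ →
      (∀ lam' ∈ Λ, ∑ i, β i * g i lam (w i) ≤ ∑ i, β i * g i lam' (w i)) →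
      lam ∈ Eff w := by
    intro w lam hlam hminw
    rw [hEff]
    refine ⟨hlam, fun lam' hlam' hle i => ?_⟩
    have hnn : ∀ j ∈ Finset.univ, 0 ≤ β j * (g j lam (w j) - g j lam' (w j)) :=
      fun j _ => mul_nonneg (hβ j).1.le (by linarith [hle j])
    have hsum : ∑ j, β j * (g j lam (w j) - g j lam' (w j)) = 0 := by
      have h1 := hminw lam' hlam'
      have h2 : 0 ≤ ∑ j, β j * (g j lam (w j) - g j lam' (w j)) :=
        Finset.sum_nonneg hnn
      have h3 : ∑ j, β j * (g j lam (w j) - g j lam' (w j))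
          = ∑ j, β j * g j lam (w j) - ∑ j, β j * g j lam' (w j) := by
        rw [← Finset.sum_sub_distrib]; congr 1; ext j; ring
      linarith
    have hz := (Finset.sum_eq_zero_iff_of_nonneg hnn).mp hsum i (Finset.mem_univ i)
    have hβi := (hβ i).1
    rcases mul_eq_zero.mp hz with h' | h'
    · exact absurd h' (ne_of_gt hβi)
    · linarith
  -- continuity of scalarized loss in lam
  have hcont : ContinuousOn (fun lam => ∑ i, β i * g i lam (z i)) Λ := by
    apply ContinuousOn.congr (f := fun lam => ∑ i, β i * dist (f (z i).1 lam) (z i).2)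
    · exact continuousOn_finset_sum _ fun i _ =>
        continuousOn_const.mul ((continuous_id.dist continuous_const).comp_continuousOn (hfc (z i).1))
    · intro lam _; simp [hg]
  obtain ⟨lamz, hlamzΛ, hmin⟩ := hcomp.exists_isMinOn hne hcont
  have hminz : ∀ lam' ∈ Λ, ∑ i, β i * g i lamz (z i) ≤ ∑ i, β i * g i lam' (z i) :=
    fun lam' hlam' => hmin hlam'
  -- lam0 is efficient for z0
  have hlam0min : ∀ lam' ∈ Λ, ∑ i, β i * g i lam0 (z0 i) ≤ ∑ i, β i * g i lam' (z0 i) := by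
    intro lam' hlam'
    have := hiso lam' hlam'
    have hpos : 0 ≤ h * ‖lam' - lam0‖ ^ α :=
      mul_nonneg hh.le (Real.rpow_nonneg (norm_nonneg _) _)
    linarith
  have hlam0Eff : lam0 ∈ Eff z0 := pareto z0 lam0 hlam0 hlam0min
  have hlamzEff : lamz ∈ Eff z := pareto z lamz hlamzΛ hminz
  -- Hölder comparison of the two losses
  have key : ∀ lam ∈ Λ,
      |(∑ i, β i * g i lam (z i)) - ∑ i, β i * g i lam (z0 i)| ≤ m * S := by
    intro lam hlam
    have heq : (∑ i, β i * g i lam (z i)) - ∑ i, β i * g i lam (z0 i)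
        = ∑ i, β i * (g i lam (z i) - g i lam (z0 i)) := by
      rw [← Finset.sum_sub_distrib]; congr 1; ext i; ring
    rw [heq]
    calc |∑ i, β i * (g i lam (z i) - g i lam (z0 i))|
        ≤ ∑ i, |β i * (g i lam (z i) - g i lam (z0 i))| := Finset.abs_sum_le_sum_abs _ _
      _ ≤ ∑ i, m * (dist (z i).1 (z0 i).1 + dist (z i).2 (z0 i).2) ^ δ := by
          apply Finset.sum_le_sum
          intro i _
          rw [abs_mul, abs_of_pos (hβ i).1]
          have h1 := hHold lam hlam i (z i) (z0 i)
          have h2 := (hβ i).2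
          have h3 : 0 ≤ |g i lam (z i) - g i lam (z0 i)| := abs_nonneg _
          nlinarith
      _ = m * S := by rw [hSdef, Finset.mul_sum]
    -- main chain
  have h1 := hiso lamz hlamzΛ
  have h2 := key lamz hlamzΛ
  have h3 := key lam0 hlam0
  have h4 := hminz lam0 hlam0
  have hchain : h * ‖lamz - lam0‖ ^ α ≤ 2 * m * S := by
    have a2 := abs_le.mp h2
    have a3 := abs_le.mp h3
    linarith [a2.1, a2.2, a3.1, a3.2]
  have hpow : ‖lamz - lam0‖ ^ α ≤ (2 * m / h) * S := by
    rw [div_mul_eq_mul_div, le_div_iff₀ hh]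
    linarith
  have hnorm : ‖lamz - lam0‖ ≤ ((2 * m / h) * S) ^ (1 / α) := by
    have hx : ‖lamz - lam0‖ = (‖lamz - lam0‖ ^ α) ^ (1 / α) := by
      rw [← Real.rpow_mul (norm_nonneg _), mul_one_div_cancel (ne_of_gt hα),
        Real.rpow_one]
    rw [hx]
    exact Real.rpow_le_rpow (Real.rpow_nonneg (norm_nonneg _) _) hpow
      (by positivity)
  refine ⟨lamz, hlamzEff, ?_⟩
  have hid : Metric.infDist lamz (Eff z0) ≤ dist lamz lam0 :=
    Metric.infDist_le_dist_of_mem hlam0Eff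
  rw [dist_eq_norm] at hid
  calc Metric.infDist lamz (Eff z0) ≤ ((2 * m / h) * S) ^ (1 / α) :=
        le_trans hid hnorm
    _ = (2 * m / h) ^ (1 / α) * S ^ (1 / α) :=
        Real.mul_rpow (by positivity) hS0
end
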